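/- arXiv:1810.09644 — 7 statements merged into one kernel-verified Lean document; each statement's English description precedes it below -/
import Mathlib

section
/- Two homogeneous completely decomposable torsion-free abelian groups of the same type that are mono-equivalent (each embeds into the other) are isomorphic. -/
namespace Paper

open DirectSum

/-- A subgroup is a direct summand. -/
def IsSummand {G : Type*} [AddCommGroup G] (A : AddSubgroup G) : Prop :=
  ∃ B : AddSubgroup G, IsCompl A B

/-- A group has rank one: it is nonzero and embeds in `ℚ`. -/
def IsRankOne (G : Type*) [AddCommGroup G] : Prop :=
  (∃ x : G, x ≠ 0) ∧ ∃ f : G →+ ℚ, Function.Injective f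

/-- A group is clipped if it has no rank-one direct summand. -/
def IsClipped (G : Type*) [AddCommGroup G] : Prop :=
  ¬ ∃ A : AddSubgroup G, IsSummand A ∧ IsRankOne A

/-- A group is `τ`-clipped if it has no direct summand isomorphic to the
rank-one group `τ` (a subgroup of `ℚ` representing a type). -/
def IsClippedFor (G : Type*) [AddCommGroup G] (τ : AddSubgroup ℚ) : Prop :=
  ¬ ∃ A : AddSubgroup G, IsSummand A ∧ Nonempty (A ≃+ τ)

/-- A group is completely decomposable if it is a direct sum of rank-one
groups (nonzero subgroups of `ℚ`). -/
def IsCompletelyDecomposable (G : Type*) [AddCommGroup G] : Prop :=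
  ∃ (ι : Type) (τ : ι → AddSubgroup ℚ), (∀ i, τ i ≠ ⊥) ∧ Nonempty (G ≃+ ⨁ i, τ i)

/-- A group is `τ`-homogeneous completely decomposable if it is a direct sum
of copies of the rank-one group `τ`. -/
def IsHomogeneousCD (G : Type*) [AddCommGroup G] (τ : AddSubgroup ℚ) : Prop :=
  τ ≠ ⊥ ∧ ∃ ι : Type, Nonempty (G ≃+ ⨁ _i : ι, τ)

/-- Two groups are mono-equivalent if each embeds into the other. -/
def MonoEquiv (G H : Type*) [AddCommGroup G] [AddCommGroup H] : Prop :=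
  (∃ f : G →+ H, Function.Injective f) ∧ (∃ f : H →+ G, Function.Injective f)

/-- A subgroup is pure if `n • x ∈ H` implies `n • x ∈ n • H`. -/
def IsPure {G : Type*} [AddCommGroup G] (H : AddSubgroup G) : Prop :=
  ∀ (n : ℤ) (x : G), n • x ∈ H → ∃ y ∈ H, n • y = n • x

/-- A group is strongly separable if every pure rank-one subgroup is a
direct summand. -/
def StronglySeparable (G : Type*) [AddCommGroup G] : Prop :=
  ∀ H : AddSubgroup G, IsPure H → IsRankOne H → IsSummand H

/-- The pure closure of an element: all `x` with `n • x` a multiple of `g`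
for some `n ≠ 0`. -/
def pureClosure {G : Type*} [AddCommGroup G] (g : G) : AddSubgroup G where
  carrier := {x | ∃ n : ℤ, n ≠ 0 ∧ n • x ∈ AddSubgroup.zmultiples g}
  zero_mem' := ⟨1, one_ne_zero, by simpa using (AddSubgroup.zmultiples g).zero_mem⟩
  add_mem' := by
    rintro x y ⟨n, hn, hx⟩ ⟨m, hm, hy⟩
    refine ⟨n * m, mul_ne_zero hn hm, ?_⟩
    have h : (n * m) • (x + y) = m • (n • x) + n • (m • y) := by
      rw [smul_add, mul_smul, mul_smul, smul_comm n m x]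
    rw [h]
    exact add_mem (AddSubgroup.zsmul_mem _ hx m) (AddSubgroup.zsmul_mem _ hy n)
  neg_mem' := by
    rintro x ⟨n, hn, hx⟩
    exact ⟨n, hn, by rw [smul_neg]; exact neg_mem hx⟩

/-- A group is indecomposable if it is nonzero and has no nontrivial
direct sum decomposition. -/
def IsIndecomposableGroup (G : Type*) [AddCommGroup G] : Prop :=
  (∃ x : G, x ≠ 0) ∧ ∀ A B : AddSubgroup G, IsCompl A B → A = ⊥ ∨ B = ⊥


open Cardinal in
/-- In a `ℚ`-vector space, the rank over `ℤ` coincides with the rank over `ℚ`. -/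
private lemma rank_int_eq_rank_rat (V : Type*) [AddCommGroup V] [Module ℚ V] :
    Module.rank ℤ V = Module.rank ℚ V := by
  apply le_antisymm
  · rw [Module.rank_def ℤ V]
    apply ciSup_le'
    rintro ⟨s, hs⟩
    exact ((LinearIndependent.iff_fractionRing ℤ ℚ).mp hs).cardinal_le_rank
  · rw [Module.rank_def ℚ V]
    apply ciSup_le'
    rintro ⟨s, hs⟩
    exact ((LinearIndependent.iff_fractionRing ℤ ℚ).mpr hs).cardinal_le_rank

open Cardinal in
/-- The `ℤ`-rank of a direct sum (as `Finsupp`) of copies of a nonzero subgroup of `ℚ`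
is the cardinality of the index set. -/
private lemma rank_finsupp_subgroup (ι : Type) (τ : AddSubgroup ℚ) (hτ : τ ≠ ⊥) :
    Module.rank ℤ (ι →₀ ↥τ) = #ι := by
  obtain ⟨x₀, hx₀m, hx₀⟩ : ∃ x ∈ τ, x ≠ 0 := by
    by_contra hcon
    push_neg at hcon
    exact hτ ((AddSubgroup.eq_bot_iff_forall τ).mpr hcon)
  -- the map `n ↦ n • x₀` from `ℤ` to `τ`
  set φ : ℤ →+ ↥τ := zmultiplesHom ↥τ ⟨x₀, hx₀m⟩ with hφdef
  have hφ : Function.Injective φ := by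
    intro a b hab
    have : a • x₀ = b • x₀ := by
      have := congrArg (Subtype.val) hab
      simpa [hφdef] using this
    exact smul_left_injective ℤ hx₀ this
  have low : #ι ≤ Module.rank ℤ (ι →₀ ↥τ) := by
    have hinj : Function.Injective (Finsupp.mapRange.linearMap
        (φ.toIntLinearMap) : (ι →₀ ℤ) →ₗ[ℤ] (ι →₀ ↥τ)) := by
      exact Finsupp.mapRange_injective _ (map_zero φ) hφ
    have := LinearMap.rank_le_of_injective _ hinj
    rwa [rank_finsupp_self'] at this
  have high : Module.rank ℤ (ι →₀ ↥τ) ≤ #ι := by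
    have hinj : Function.Injective (Finsupp.mapRange.linearMap
        (τ.subtype.toIntLinearMap) : (ι →₀ ↥τ) →ₗ[ℤ] (ι →₀ ℚ)) := by
      exact Finsupp.mapRange_injective _ (map_zero _) Subtype.val_injective
    have := LinearMap.rank_le_of_injective _ hinj
    rwa [rank_int_eq_rank_rat (ι →₀ ℚ), rank_finsupp_self'] at this
  exact le_antisymm high low

/-- Two homogeneous completely decomposable torsion-free abelian
groups of the same type that are mono-equivalent are isomorphic. -/
theorem statement0 (G G' : Type*) [AddCommGroup G] [AddCommGroup G']
    [NoZeroSMulDivisors ℤ G] [NoZeroSMulDivisors ℤ G'] (τ : AddSubgroup ℚ)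
    (hG : IsHomogeneousCD G τ) (hG' : IsHomogeneousCD G' τ)
    (h : MonoEquiv G G') : Nonempty (G ≃+ G') := by
  classical
  obtain ⟨hτ, ι, ⟨e⟩⟩ := hG
  obtain ⟨-, ι', ⟨e'⟩⟩ := hG'
  obtain ⟨⟨f, hf⟩, ⟨f', hf'⟩⟩ := h
  let d : (ι →₀ ↥τ) ≃+ (⨁ _i : ι, ↥τ) := finsuppAddEquivDFinsupp
  let d' : (ι' →₀ ↥τ) ≃+ (⨁ _i : ι', ↥τ) := finsuppAddEquivDFinsupp
  let E : G ≃+ (ι →₀ ↥τ) := e.trans d.symm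
  let E' : G' ≃+ (ι' →₀ ↥τ) := e'.trans d'.symm
  let g : (ι →₀ ↥τ) →+ (ι' →₀ ↥τ) :=
    E'.toAddMonoidHom.comp (f.comp E.symm.toAddMonoidHom)
  have hg : Function.Injective g :=
    E'.injective.comp (hf.comp E.symm.injective)
  let g' : (ι' →₀ ↥τ) →+ (ι →₀ ↥τ) :=
    E.toAddMonoidHom.comp (f'.comp E'.symm.toAddMonoidHom)
  have hg' : Function.Injective g' :=
    E.injective.comp (hf'.comp E'.symm.injective)
  have hrank : Module.rank ℤ (ι →₀ ↥τ) = Module.rank ℤ (ι' →₀ ↥τ) :=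
    le_antisymm (LinearMap.rank_le_of_injective g.toIntLinearMap hg)
      (LinearMap.rank_le_of_injective g'.toIntLinearMap hg')
  rw [rank_finsupp_subgroup ι τ hτ, rank_finsupp_subgroup ι' τ hτ] at hrank
  obtain ⟨eq⟩ := Cardinal.eq.mp hrank
  exact ⟨E.trans ((Finsupp.domCongr eq).trans E'.symm)⟩

end Paper
end

section
/- Let G be a torsion-free abelian group with decompositions G = D ⊕ B = A ⊕ C, where A and D are strongly separable, and both B and C have no rank-1 direct summand whose type is an extractable type of A or of D. Then D and A are mono-equivalent. -/
/-! Projecting along `C` embeds `D` into `A` as soon as `D ∩ C = 0`, and symmetrically for `A`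
along `B`. If `0 ≠ x ∈ D ∩ C`, the pure closure `H` of `x` in `D` is pure of rank one, hence a
summand of `D` by strong separability, hence a summand of `G = H ⊕ K ⊕ B`. A summand of a
torsion-free group is pure, so `H ≤ C`, and the modular law makes `H` a summand of `C`; its type is
extractable for `D`, contradicting that `C` is clipped for it. -/

namespace Paper

open DirectSum

section

variable {G : Type*} [AddCommGroup G]

instance [NoZeroSMulDivisors ℤ G] (H : AddSubgroup G) : NoZeroSMulDivisors ℤ H :=
  H.subtype_injective.noZeroSMulDivisors _ rfl fun _ _ => rfl

theorem mem_pureClosure {g x : G} :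
    x ∈ pureClosure g ↔ ∃ n : ℤ, n ≠ 0 ∧ n • x ∈ AddSubgroup.zmultiples g :=
  Iff.rfl

theorem isPure_pureClosure (g : G) : IsPure (pureClosure g) := by
  intro n x ⟨k, hk, hkx⟩
  rcases eq_or_ne n 0 with rfl | hn
  · exact ⟨0, zero_mem _, by simp⟩
  · exact ⟨x, ⟨k * n, mul_ne_zero hk hn, by rwa [mul_smul]⟩, rfl⟩

theorem mem_pureClosure_self (g : G) : g ∈ pureClosure g :=
  ⟨1, one_ne_zero, by simp⟩

/-- Extending `k ↦ k` along `ℤ ≅ ⟨g⟩` to the divisible group `ℚ` gives a map that is injective,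
since every element of `pureClosure g` has a nonzero multiple in `⟨g⟩`. -/
theorem exists_injective_pureClosure_to_rat [NoZeroSMulDivisors ℤ G] {g : G} (hg : g ≠ 0) :
    ∃ f : pureClosure g →+ ℚ, Function.Injective f := by
  obtain ⟨f, hf⟩ := (Module.Baer.of_divisible ℚ).extension_property_addMonoidHom
    (zmultiplesHom (pureClosure g) ⟨g, mem_pureClosure_self g⟩)
    (fun k l hkl => smul_left_injective ℤ hg (congrArg Subtype.val hkl))
    (Int.castAddHom ℚ)
  refine ⟨f, (injective_iff_map_eq_zero f).mpr fun x hx => ?_⟩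
  obtain ⟨n, hn, k, hk⟩ := mem_pureClosure.mp x.2
  simp only at hk
  have hnx : n • x = k • ⟨g, mem_pureClosure_self g⟩ := Subtype.ext hk.symm
  have hk0 : k = 0 := by
    have : (k : ℚ) = f (n • x) := by rw [hnx]; exact (DFunLike.congr_fun hf k).symm
    simpa [hx] using this
  have hnx0 : n • (x : G) = 0 := by rw [← hk, hk0, zero_smul]
  exact Subtype.ext ((smul_eq_zero.mp hnx0).resolve_left hn)

theorem isRankOne_pureClosure [NoZeroSMulDivisors ℤ G] {g : G} (hg : g ≠ 0) :
    IsRankOne (pureClosure g) :=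
  ⟨⟨⟨g, mem_pureClosure_self g⟩, by simpa using hg⟩, exists_injective_pureClosure_to_rat hg⟩

theorem IsRankOne.exists_addEquiv {H : Type*} [AddCommGroup H] (h : IsRankOne H) :
    ∃ τ : AddSubgroup ℚ, τ ≠ ⊥ ∧ Nonempty (H ≃+ τ) := by
  obtain ⟨⟨x, hx⟩, f, hf⟩ := h
  refine ⟨f.range, fun hbot => hx (hf ?_), ⟨AddMonoidHom.ofInjective hf⟩⟩
  have : f x ∈ f.range := ⟨x, rfl⟩
  rw [hbot, AddSubgroup.mem_bot] at this
  rw [this, map_zero]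

theorem map_pureClosure_le {H : Type*} [AddCommGroup H] (f : G →+ H) (g : G) :
    (pureClosure g).map f ≤ pureClosure (f g) := by
  rintro _ ⟨x, ⟨n, hn, k, hk⟩, rfl⟩
  exact ⟨n, hn, k, by simp only at hk ⊢; rw [← map_zsmul, ← map_zsmul, hk]⟩

theorem IsSummand.mem_of_zsmul_mem [NoZeroSMulDivisors ℤ G] {C : AddSubgroup G}
    (hC : IsSummand C) {n : ℤ} (hn : n ≠ 0) {x : G} (hx : n • x ∈ C) : x ∈ C := by
  obtain ⟨A, hCA⟩ := hC
  obtain ⟨c, hc, a, ha, rfl⟩ := AddSubgroup.mem_sup.mp (hCA.sup_eq_top ▸ AddSubgroup.mem_top x)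
  have hna : n • a = 0 := AddSubgroup.disjoint_def.mp hCA.disjoint
    (by simpa [smul_add] using C.sub_mem hx (C.zsmul_mem hc n)) (A.zsmul_mem ha n)
  rw [(smul_eq_zero.mp hna).resolve_left hn, add_zero]
  exact hc

theorem IsSummand.pureClosure_le [NoZeroSMulDivisors ℤ G] {C : AddSubgroup G}
    (hC : IsSummand C) {g : G} (hg : g ∈ C) : pureClosure g ≤ C := by
  rintro x ⟨n, hn, hnx⟩
  exact hC.mem_of_zsmul_mem hn (AddSubgroup.zmultiples_le_of_mem hg hnx)

theorem IsSummand.map_subtype {D : AddSubgroup G} (hD : IsSummand D) {H : AddSubgroup D}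
    (hH : IsSummand H) : IsSummand (H.map D.subtype) := by
  obtain ⟨B, hDB⟩ := hD
  obtain ⟨K, hHK⟩ := hH
  have hHK' : Disjoint (H.map D.subtype) (K.map D.subtype) :=
    AddSubgroup.disjoint_map D.subtype_injective hHK.disjoint
  refine ⟨K.map D.subtype ⊔ B, hHK'.isCompl_sup_right_of_isCompl_sup_left ?_⟩
  rwa [← AddSubgroup.map_sup, hHK.sup_eq_top, ← AddMonoidHom.range_eq_map,
    AddSubgroup.range_subtype]

theorem IsSummand.addSubgroupOf {H C : AddSubgroup G} (hH : IsSummand H) (hHC : H ≤ C) :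
    IsSummand (H.addSubgroupOf C) := by
  obtain ⟨K, hHK⟩ := hH
  refine ⟨K.addSubgroupOf C, ?_, ?_⟩
  · rw [AddSubgroup.disjoint_def]
    intro c hcH hcK
    exact Subtype.ext (AddSubgroup.disjoint_def.mp hHK.disjoint hcH hcK)
  · rw [codisjoint_iff, ← AddSubgroup.inf_addSubgroupOf_right K,
      ← AddSubgroup.addSubgroupOf_sup hHC inf_le_right, ← sup_inf_assoc_of_le K hHC,
      hHK.sup_eq_top, top_inf_eq, AddSubgroup.addSubgroupOf_self]

theorem exists_injective_of_disjoint {A C D : AddSubgroup G} (hAC : IsCompl A C)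
    (hDC : Disjoint D C) : ∃ f : D →+ A, Function.Injective f := by
  have hAC' := AddSubgroup.toIntSubmodule.isCompl hAC
  refine ⟨(Submodule.projectionOnto _ _ hAC').toAddMonoidHom.comp D.subtype,
    (injective_iff_map_eq_zero _).mpr fun d hd => ?_⟩
  have hdC : (d : G) ∈ C := (Submodule.projectionOnto_apply_eq_zero_iff hAC').mp hd
  exact Subtype.ext (AddSubgroup.disjoint_def.mp hDC d.2 hdC)

theorem disjoint_of_forall_isClippedFor [NoZeroSMulDivisors ℤ G] {D C : AddSubgroup G}
    (hD : IsSummand D) (hC : IsSummand C) (hDsep : StronglySeparable D)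
    (hclip : ∀ τ : AddSubgroup ℚ, τ ≠ ⊥ →
      (∃ S : AddSubgroup D, IsSummand S ∧ Nonempty (S ≃+ τ)) → IsClippedFor C τ) :
    Disjoint D C := by
  rw [AddSubgroup.disjoint_def]
  intro x hxD hxC
  by_contra hx
  set H := pureClosure (⟨x, hxD⟩ : D)
  have hH : IsRankOne H := isRankOne_pureClosure (by simpa using hx)
  obtain ⟨τ, hτ, ⟨e⟩⟩ := hH.exists_addEquiv
  have hHD : IsSummand H := hDsep H (isPure_pureClosure _) hH
  have hHC : H.map D.subtype ≤ C := (map_pureClosure_le _ _).trans (hC.pureClosure_le hxC)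
  refine hclip τ hτ ⟨H, hHD, ⟨e⟩⟩ ⟨_, (hD.map_subtype hHD).addSubgroupOf hHC, ⟨?_⟩⟩
  exact ((AddSubgroup.addSubgroupOfEquivOfLe hHC).trans
    (H.equivMapOfInjective _ D.subtype_injective).symm).trans e

end

/-- With `G = D ⊕ B = A ⊕ C`, `A`, `D` strongly separable, and `B`, `C`
clipped for every extractable type of `A` or `D`, the groups `D` and `A` are
mono-equivalent. -/
theorem statement1 (G : Type*) [AddCommGroup G] [NoZeroSMulDivisors ℤ G]
    (D B A C : AddSubgroup G) (hDB : IsCompl D B) (hAC : IsCompl A C)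
    (hD : StronglySeparable D) (hA : StronglySeparable A)
    (hclip : ∀ τ : AddSubgroup ℚ, τ ≠ ⊥ →
      ((∃ S : AddSubgroup A, IsSummand S ∧ Nonempty (S ≃+ τ)) ∨
       (∃ S : AddSubgroup D, IsSummand S ∧ Nonempty (S ≃+ τ))) →
      IsClippedFor B τ ∧ IsClippedFor C τ) :
    MonoEquiv D A :=
  ⟨exists_injective_of_disjoint hAC <| disjoint_of_forall_isClippedFor ⟨B, hDB⟩ ⟨A, hAC.symm⟩ hD
      fun τ hτ hτD => (hclip τ hτ (.inr hτD)).2,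
    exists_injective_of_disjoint hDB <| disjoint_of_forall_isClippedFor ⟨C, hAC⟩ ⟨D, hDB.symm⟩ hA
      fun τ hτ hτA => (hclip τ hτ (.inl hτA)).1⟩

end Paper
end

section
/- If G = A ⊕ B is a torsion-free abelian group where A is completely decomposable and both A and B are τ-clipped, then G is τ-clipped. -/
namespace Paper

open DirectSum

/-!
A summand `C ≃ τ` of `G` has rank one, so a homomorphism from `C` to a torsion-free group that
kills one nonzero element of `C` kills all of it. Hence if `F` is the finite set of rank-one
components of `A` in the support of some nonzero `c ∈ C`, the projection onto the other components
kills `C`, and `C` is a summand of `B ⊕ A_F`. So it suffices to add to `B` the components in `F`,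
rank-one groups not isomorphic to `τ`, one at a time.

For `G = R ⊕ B` with `R` of rank one, `R ≄ τ`, and `G = C ⊕ D`: if `R ≤ D`, projecting `C` into
`B` along `R` gives a summand of `B` isomorphic to `τ`; if `C ≤ B`, `C` itself is one; otherwise
both projections are injective, so `R` and `C` embed into each other. Mutually embeddable subgroups
of `ℚ` are isomorphic, because `Z ≃ Y` whenever `n • Y ≤ Z ≤ Y` for some `n ≠ 0`; this is proved
one prime factor of `n` at a time, using that `ℚ` is locally cyclic.
-/

open Function

section RankOne

variable {H M : Type*} [AddCommGroup H] [AddCommGroup M]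

theorem exists_zsmul_eq_zsmul {e : H →+ ℚ} (he : Injective e) {x : H} (hx : x ≠ 0) (y : H) :
    ∃ a b : ℤ, a ≠ 0 ∧ a • y = b • x := by
  have hex : e x ≠ 0 := (map_ne_zero_iff e he).2 hx
  refine ⟨(e y / e x).den, (e y / e x).num, by exact_mod_cast (e y / e x).den_nz, he ?_⟩
  rw [map_zsmul, map_zsmul, zsmul_eq_mul, zsmul_eq_mul, ← Rat.mul_den_eq_num]
  push_cast
  field_simp

theorem eq_zero_or_injective [NoZeroSMulDivisors ℤ M] {e : H →+ ℚ} (he : Injective e)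
    (φ : H →+ M) : φ = 0 ∨ Injective φ := by
  refine or_iff_not_imp_right.2 fun hφ => AddMonoidHom.ext fun y => ?_
  obtain ⟨x, hx, hx0⟩ : ∃ x, φ x = 0 ∧ x ≠ 0 := by
    simpa [injective_iff_map_eq_zero] using hφ
  obtain ⟨a, b, ha, hab⟩ := exists_zsmul_eq_zsmul he hx0 y
  have : a • φ y = 0 := by rw [← map_zsmul, hab, map_zsmul, hx, smul_zero]
  exact (smul_eq_zero.1 this).resolve_left ha

theorem exists_forall_apply_eq_mul {X : AddSubgroup ℚ} (φ : X →+ ℚ) :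
    ∃ q : ℚ, ∀ x : X, φ x = q * x := by
  by_cases hX : ∃ x₀ : X, x₀ ≠ 0
  · obtain ⟨x₀, hx₀⟩ := hX
    have hx₀' : (x₀ : ℚ) ≠ 0 := fun h => hx₀ (Subtype.ext h)
    refine ⟨φ x₀ / x₀, fun x => ?_⟩
    rcases eq_zero_or_injective X.subtype_injective
      (φ - (AddMonoidHom.mulLeft (φ x₀ / x₀)).comp X.subtype) with h | h
    · simpa [sub_eq_zero] using DFunLike.congr_fun h x
    · exact absurd (h (a₁ := x₀) (a₂ := 0) (by simp [hx₀'])) hx₀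
  · simp only [not_exists, not_not] at hX
    exact ⟨0, fun x => by simp [hX x]⟩

theorem exists_closure_pair_eq_zmultiples (a b : ℚ) :
    ∃ c : ℚ, AddSubgroup.closure {a, b} = AddSubgroup.zmultiples c := by
  set φ : ℤ →+ ℚ := (AddMonoidHom.mulRight ((a.den : ℚ) * b.den)⁻¹).comp (Int.castAddHom ℚ)
  have hφ : ∀ k : ℤ, φ k = k / (a.den * b.den) := fun k => by simp [φ, div_eq_mul_inv]
  have hle : AddSubgroup.closure {a, b} ≤ φ.range := by
    rw [AddSubgroup.closure_le, Set.insert_subset_iff, Set.singleton_subset_iff]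
    constructor
    · refine ⟨a.num * b.den, ?_⟩
      rw [hφ]; push_cast; rw [← Rat.mul_den_eq_num]; field_simp
    · refine ⟨b.num * a.den, ?_⟩
      rw [hφ]; push_cast; rw [← Rat.mul_den_eq_num]; field_simp
  obtain ⟨k, hk⟩ := Int.subgroup_cyclic ((AddSubgroup.closure {a, b}).comap φ)
  refine ⟨φ k, ?_⟩
  rw [← AddSubgroup.map_comap_eq_self hle, hk, AddMonoidHom.map_closure, Set.image_singleton,
    AddSubgroup.zmultiples_eq_closure]

end RankOne

section Sandwich

theorem nonempty_addEquiv_of_prime_mul_le {Y Z : AddSubgroup ℚ} {p : ℕ} (hp : p.Prime)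
    (hpY : ∀ y ∈ Y, (p : ℚ) * y ∈ Z) (hZY : Z ≤ Y) : Nonempty (Z ≃+ Y) := by
  by_cases hZ : ∀ z ∈ Z, ∃ y ∈ Y, (p : ℚ) * y = z
  · have hZ' : Z = Y.map (AddMonoidHom.mulLeft (p : ℚ)) :=
      AddSubgroup.ext fun z => ⟨hZ z, fun ⟨y, hy, hyz⟩ => hyz ▸ hpY y hy⟩
    exact ⟨(AddEquiv.addSubgroupCongr hZ').trans (AddSubgroup.equivMapOfInjective Y _
      (mul_right_injective₀ (by exact_mod_cast hp.ne_zero))).symm⟩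
  obtain ⟨z, hz, hzp⟩ : ∃ z ∈ Z, ∀ y ∈ Y, (p : ℚ) * y ≠ z := by simpa using hZ
  suffices Y ≤ Z from ⟨AddEquiv.addSubgroupCongr (le_antisymm hZY this)⟩
  intro y hy
  obtain ⟨c, hc⟩ := exists_closure_pair_eq_zmultiples z y
  have hcY : c ∈ Y := by
    have : AddSubgroup.closure {z, y} ≤ Y := by
      rw [AddSubgroup.closure_le, Set.insert_subset_iff, Set.singleton_subset_iff]
      exact ⟨hZY hz, hy⟩
    exact this (hc ▸ AddSubgroup.mem_zmultiples c)
  obtain ⟨i, rfl⟩ : z ∈ AddSubgroup.zmultiples c := hc ▸ AddSubgroup.subset_closure (by simp)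
  obtain ⟨j, rfl⟩ : y ∈ AddSubgroup.zmultiples c := hc ▸ AddSubgroup.subset_closure (by simp)
  have hpi : ¬ (p : ℤ) ∣ i := by
    rintro ⟨k, rfl⟩
    exact hzp (k • c) (Y.zsmul_mem hcY k) (by push_cast [zsmul_eq_mul]; ring)
  -- `c` is an integral combination of `i • c ∈ Z` and `p * c ∈ Z`
  obtain ⟨u, v, huv⟩ := (Prime.coprime_iff_not_dvd (Nat.prime_iff_prime_int.mp hp)).2 hpi
  have hcZ : c = u • ((p : ℚ) * c) + v • (i • c) := by
    rw [zsmul_eq_mul, zsmul_eq_mul, zsmul_eq_mul, ← mul_assoc, ← mul_assoc, ← add_mul]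
    have huv' : ((u * p + v * i : ℤ) : ℚ) = 1 := by exact_mod_cast huv
    push_cast at huv'
    rw [huv', one_mul]
  rw [hcZ]
  exact Z.zsmul_mem (Z.add_mem (Z.zsmul_mem (hpY c hcY) u) (Z.zsmul_mem hz v)) j

theorem nonempty_addEquiv_of_mul_le {Y Z : AddSubgroup ℚ} {n : ℕ} (hn : n ≠ 0)
    (hnY : ∀ y ∈ Y, (n : ℚ) * y ∈ Z) (hZY : Z ≤ Y) : Nonempty (Z ≃+ Y) := by
  induction n using induction_on_primes generalizing Z with
  | zero => exact absurd rfl hn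
  | one => exact ⟨AddEquiv.addSubgroupCongr (le_antisymm hZY fun y hy => by simpa using hnY y hy)⟩
  | prime_mul p a hp ih =>
    -- pass through `W = Z + a Y`, which sits between `a Y` and `Y`, and between `p W` and `W`
    set W := Z ⊔ Y.map (AddMonoidHom.mulLeft (a : ℚ))
    have haY : ∀ y ∈ Y, (a : ℚ) * y ∈ Y := fun y hy => by
      simpa [nsmul_eq_mul] using Y.nsmul_mem hy a
    obtain ⟨eW⟩ := ih (Z := W) (right_ne_zero_of_mul hn)
      (fun y hy => AddSubgroup.mem_sup_right ⟨y, hy, rfl⟩)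
      (sup_le hZY (AddSubgroup.map_le_iff_le_comap.2 fun y hy => haY y hy))
    have hpW : ∀ w ∈ W, (p : ℚ) * w ∈ Z := by
      intro w hw
      obtain ⟨z, hz, _, ⟨y, hy, rfl⟩, rfl⟩ := AddSubgroup.mem_sup.1 hw
      rw [mul_add, AddMonoidHom.coe_mulLeft, ← mul_assoc]
      exact Z.add_mem (by simpa [nsmul_eq_mul] using Z.nsmul_mem hz p) (by exact_mod_cast hnY y hy)
    obtain ⟨eZ⟩ := nonempty_addEquiv_of_prime_mul_le hp hpW le_sup_left
    exact ⟨eZ.trans eW⟩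

theorem nonempty_addEquiv_of_injective {H : Type*} [AddCommGroup H] {Y : AddSubgroup ℚ}
    (hY : Y ≠ ⊥) {f : H →+ Y} (hf : Injective f) {g : Y →+ H} (hg : Injective g) :
    Nonempty (H ≃+ Y) := by
  set Z := (Y.subtype.comp f).range
  have hZY : Z ≤ Y := by rintro _ ⟨x, rfl⟩; exact (f x).2
  obtain ⟨t, ht⟩ := exists_forall_apply_eq_mul ((Y.subtype.comp f).comp g)
  have ht0 : t ≠ 0 := by
    rintro rfl
    obtain ⟨y, hy0⟩ := AddSubgroup.ne_bot_iff_exists_ne_zero.1 hY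
    refine hy0 ((injective_iff_map_eq_zero (f.comp g)).1 (hf.comp hg) y (Subtype.ext ?_))
    simpa using ht y
  -- `f ∘ g` is multiplication by `t`, so `t.num • Y ⊆ t.den • Z ⊆ Z`
  have hnum : ∀ y ∈ Y, (t.num.natAbs : ℚ) * y ∈ Z := by
    intro y hy
    have : (t.num : ℚ) * y ∈ Z := by
      rw [← Rat.mul_den_eq_num, mul_comm t, mul_assoc, ← ht ⟨y, hy⟩]
      simpa [nsmul_eq_mul] using Z.nsmul_mem ⟨g ⟨y, hy⟩, rfl⟩ t.den
    rcases abs_choice (t.num : ℚ) with h | h <;>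
      simp only [Nat.cast_natAbs, Int.cast_abs, h, neg_mul] <;> simp [Z.neg_mem_iff, this]
  obtain ⟨e⟩ := nonempty_addEquiv_of_mul_le (by simpa using ht0) hnum hZY
  exact ⟨(AddMonoidHom.ofInjective (f := Y.subtype.comp f) (Y.subtype_injective.comp hf)).trans e⟩

end Sandwich

section Summands

variable {G : Type*} [AddCommGroup G] {τ : AddSubgroup ℚ}

instance inst_s3 [NoZeroSMulDivisors ℤ G] (H : AddSubgroup G) : NoZeroSMulDivisors ℤ H :=
  Subtype.val_injective.noZeroSMulDivisors _ rfl fun _ _ => rfl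

noncomputable def proj {H K : AddSubgroup G} (h : IsCompl H K) : G →+ G :=
  (Submodule.projection _ _ (AddSubgroup.toIntSubmodule.isCompl h)).toAddMonoidHom

variable {H K : AddSubgroup G}

theorem proj_mem (h : IsCompl H K) (x : G) : proj h x ∈ H :=
  Submodule.projection_apply_mem (AddSubgroup.toIntSubmodule.isCompl h) x

theorem proj_of_mem (h : IsCompl H K) {x : G} (hx : x ∈ H) : proj h x = x :=
  Submodule.projection_apply_of_mem_left (AddSubgroup.toIntSubmodule.isCompl h) hx

theorem proj_eq_zero_iff (h : IsCompl H K) {x : G} : proj h x = 0 ↔ x ∈ K :=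
  Submodule.projection_apply_eq_zero_iff _

theorem proj_add_proj (h : IsCompl H K) (x : G) : proj h x + proj h.symm x = x :=
  Submodule.projection_add_projection_eq_self _ x

theorem le_of_proj_comp_subtype_eq_zero (h : IsCompl H K) {C : AddSubgroup G}
    (hC : (proj h).comp C.subtype = 0) : C ≤ K :=
  fun x hx => (proj_eq_zero_iff h).1 (DFunLike.congr_fun hC ⟨x, hx⟩)

theorem le_of_mem_of_isCompl [NoZeroSMulDivisors ℤ G] (h : IsCompl H K) {C : AddSubgroup G}
    {e : C →+ ℚ} (he : Injective e) {c : C} (hc : c ≠ 0) (hcH : (c : G) ∈ H) : C ≤ H := by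
  rcases eq_zero_or_injective he ((proj h.symm).comp C.subtype) with hC | hC
  · exact le_of_proj_comp_subtype_eq_zero h.symm hC
  · exact absurd (hC (a₂ := 0) (by simpa using (proj_eq_zero_iff h.symm).2 hcH)) hc

theorem isCompl_addSubgroupOf_sup {X Y : AddSubgroup G} (h : Disjoint X Y) :
    IsCompl (X.addSubgroupOf (X ⊔ Y)) (Y.addSubgroupOf (X ⊔ Y)) :=
  ⟨AddSubgroup.disjoint_def.2 fun hx hy => Subtype.ext (AddSubgroup.disjoint_def.1 h hx hy),
    AddSubgroup.codisjoint_addSubgroupOf_sup X Y⟩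

theorem IsClippedFor.of_addEquiv {G' : Type*} [AddCommGroup G'] (e : G ≃+ G')
    (hG : IsClippedFor G τ) : IsClippedFor G' τ := by
  rintro ⟨C, ⟨D, hCD⟩, ⟨φ⟩⟩
  exact hG ⟨_, ⟨_, e.symm.mapAddSubgroup.isCompl hCD⟩,
    ⟨(AddSubgroup.equivMapOfInjective C _ e.symm.injective).symm.trans φ⟩⟩

theorem IsClippedFor.isEmpty_addEquiv {X Y : AddSubgroup G} (hH : IsClippedFor H τ)
    (hXY : Disjoint X Y) (hXYH : X ⊔ Y = H) : IsEmpty (X ≃+ τ) := by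
  subst hXYH
  exact ⟨fun φ => hH ⟨_, ⟨_, isCompl_addSubgroupOf_sup hXY⟩,
    ⟨(AddSubgroup.addSubgroupOfEquivOfLe le_sup_left).trans φ⟩⟩⟩

theorem IsClippedFor.isEmpty_addEquiv_of_le {C D : AddSubgroup G} (hH : IsClippedFor H τ)
    (hCD : IsCompl C D) (hCH : C ≤ H) : IsEmpty (C ≃+ τ) :=
  hH.isEmpty_addEquiv (hCD.disjoint.mono_right inf_le_left)
    (by rw [← sup_inf_assoc_of_le D hCH, hCD.sup_eq_top, top_inf_eq])

theorem IsClippedFor.isEmpty_addEquiv_of_le_compl {R B C D : AddSubgroup G}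
    (hB : IsClippedFor B τ) (hRB : IsCompl R B) (hCD : IsCompl C D) (hRD : R ≤ D) :
    IsEmpty (C ≃+ τ) := by
  set π := (proj hRB.symm).comp C.subtype
  have hCD0 : ∀ c : C, (c : G) ∈ D → c = 0 := fun c hc =>
    Subtype.ext (AddSubgroup.disjoint_def.1 hCD.disjoint c.2 hc)
  have hπ : Injective π := (injective_iff_map_eq_zero π).2 fun c hc =>
    hCD0 c (hRD ((proj_eq_zero_iff hRB.symm).1 hc))
  have hπD : ∀ x : G, proj hRB.symm x - x ∈ D := fun x => by
    rw [eq_sub_of_add_eq' (proj_add_proj hRB x), sub_sub_cancel_left]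
    exact D.neg_mem (hRD (proj_mem hRB x))
  have hdis : Disjoint π.range (B ⊓ D) := by
    refine AddSubgroup.disjoint_def.2 ?_
    rintro _ ⟨c, rfl⟩ hc
    have hcD : (c : G) ∈ D := by simpa [π] using D.sub_mem hc.2 (hπD c)
    rw [hCD0 c hcD, map_zero]
  have hsup : π.range ⊔ (B ⊓ D) = B := by
    refine le_antisymm (sup_le (fun _ ⟨c, hc⟩ => hc ▸ proj_mem hRB.symm c) inf_le_left)
      fun b hb => ?_
    obtain ⟨c, hc, d, hd, rfl⟩ := AddSubgroup.mem_sup.1 (hCD.sup_eq_top ▸ AddSubgroup.mem_top b)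
    rw [← proj_of_mem hRB.symm hb, map_add]
    exact add_mem (AddSubgroup.mem_sup_left ⟨⟨c, hc⟩, rfl⟩)
      (AddSubgroup.mem_sup_right ⟨proj_mem _ d, by simpa using D.add_mem (hπD d) hd⟩)
  exact ⟨fun φ =>
    (hB.isEmpty_addEquiv hdis hsup).false ((AddMonoidHom.ofInjective hπ).symm.trans φ)⟩

section Exchange

variable [NoZeroSMulDivisors ℤ G]

theorem isClippedFor_of_isCompl (hτ : τ ≠ ⊥) {R B : AddSubgroup G} (hRB : IsCompl R B)
    {e : R →+ ℚ} (he : Injective e) (hRτ : IsEmpty (R ≃+ τ)) (hB : IsClippedFor B τ) :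
    IsClippedFor G τ := by
  rintro ⟨C, ⟨D, hCD⟩, ⟨φ⟩⟩
  rcases eq_zero_or_injective he ((proj hCD).comp R.subtype) with hRC | hRC
  · exact (hB.isEmpty_addEquiv_of_le_compl hRB hCD
      (le_of_proj_comp_subtype_eq_zero hCD hRC)).false φ
  rcases eq_zero_or_injective (e := τ.subtype.comp φ.toAddMonoidHom)
    (τ.subtype_injective.comp φ.injective) ((proj hRB).comp C.subtype) with hCR | hCR
  · exact (hB.isEmpty_addEquiv_of_le hCD (le_of_proj_comp_subtype_eq_zero hRB hCR)).false φ
  -- both projections are injective: `R` and `C ≃ τ` embed into each other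
  let u : R →+ C := ((proj hCD).comp R.subtype).codRestrict C (fun r => proj_mem hCD r)
  let v : C →+ R := ((proj hRB).comp C.subtype).codRestrict R (fun c => proj_mem hRB c)
  have hu : Injective u := fun _ _ h => hRC (congrArg Subtype.val h)
  have hv : Injective v := fun _ _ h => hCR (congrArg Subtype.val h)
  obtain ⟨w⟩ := nonempty_addEquiv_of_injective hτ (f := φ.toAddMonoidHom.comp u)
    (φ.injective.comp hu) (g := v.comp φ.symm.toAddMonoidHom) (hv.comp φ.symm.injective)
  exact hRτ.false w

theorem isClippedFor_sup (hτ : τ ≠ ⊥) {R B : AddSubgroup G} (hRB : Disjoint R B)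
    {e : R →+ ℚ} (he : Injective e) (hRτ : IsEmpty (R ≃+ τ)) (hB : IsClippedFor B τ) :
    IsClippedFor (R ⊔ B : AddSubgroup G) τ :=
  let eR := AddSubgroup.addSubgroupOfEquivOfLe (le_sup_left : R ≤ R ⊔ B)
  isClippedFor_of_isCompl hτ (isCompl_addSubgroupOf_sup hRB) (e := e.comp eR.toAddMonoidHom)
    (he.comp eR.injective) ⟨fun w => hRτ.false (eR.symm.trans w)⟩
    (hB.of_addEquiv (AddSubgroup.addSubgroupOfEquivOfLe le_sup_right).symm)

end Exchange

end Summands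

section Independent

variable {G : Type*} [AddCommGroup G] {ι : Type*}

theorem iSupIndep_range_comp_of [DecidableEq ι] {β : ι → Type*} [∀ i, AddCommGroup (β i)]
    {f : (⨁ i, β i) →+ G} (hf : Injective f) :
    iSupIndep fun i => (f.comp (of β i)).range := by
  intro i
  have hle : ⨆ (j) (_ : j ≠ i), (f.comp (of β j)).range ≤
      (DFinsupp.evalAddMonoidHom i).ker.map f :=
    iSup₂_le fun j hji => by
      rintro _ ⟨b, rfl⟩
      exact ⟨of β j b, DirectSum.of_eq_of_ne j i b hji.symm, rfl⟩
  refine AddSubgroup.disjoint_def.2 fun {x} hx hx' => ?_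
  obtain ⟨b, rfl⟩ := hx
  obtain ⟨y, hy, hyb⟩ := hle hx'
  have hb : of β i b = y := hf hyb.symm
  have hyi : y i = 0 := hy
  rw [← hb, DirectSum.of_eq_same] at hyi
  simp [hyi]

theorem iSup_range_comp_of [DecidableEq ι] {β : ι → Type*} [∀ i, AddCommGroup (β i)]
    (f : (⨁ i, β i) →+ G) : ⨆ i, (f.comp (of β i)).range = f.range := by
  refine le_antisymm (iSup_le fun i _ ⟨b, hb⟩ => ⟨of β i b, hb⟩) ?_
  rintro _ ⟨y, rfl⟩
  induction y using DirectSum.induction_on with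
  | zero => simp
  | of i b => exact AddSubgroup.mem_iSup_of_mem i ⟨b, rfl⟩
  | add y z hy hz => simpa using add_mem hy hz

variable {S : ι → AddSubgroup G} {A B : AddSubgroup G}

theorem isCompl_sup_biSup (hS : iSupIndep S) (hSA : ⨆ i, S i = A) (hAB : IsCompl A B)
    (F : Finset ι) : IsCompl (B ⊔ ⨆ i ∈ F, S i) (⨆ (i) (_ : i ∉ F), S i) := by
  have hsplit := iSup_split S (· ∈ F)
  refine ⟨?_, ?_⟩
  · have hF : Disjoint (⨆ i ∈ F, S i) (⨆ (i) (_ : i ∉ F), S i) := by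
      simpa using hS.disjoint_biSup_biSup' (s := ↑F) disjoint_compl_right F.finite_toSet
    have hFB : Disjoint ((⨆ (i) (_ : i ∉ F), S i) ⊔ ⨆ i ∈ F, S i) B := by
      rw [sup_comm, ← hsplit, hSA]
      exact hAB.disjoint
    rw [sup_comm]
    exact (hF.symm.disjoint_sup_right_of_disjoint_sup_left hFB).symm
  · rw [codisjoint_iff, sup_assoc, ← hsplit, hSA, sup_comm, hAB.sup_eq_top]

theorem isClippedFor_sup_biSup [NoZeroSMulDivisors ℤ G] {τ : AddSubgroup ℚ} (hτ : τ ≠ ⊥)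
    (hS : iSupIndep S) (hSe : ∀ i, ∃ e : S i →+ ℚ, Injective e) (hSτ : ∀ i, IsEmpty (S i ≃+ τ))
    (hSB : Disjoint (⨆ i, S i) B) (hB : IsClippedFor B τ) (F : Finset ι) :
    IsClippedFor (B ⊔ ⨆ i ∈ F, S i : AddSubgroup G) τ := by
  classical
  induction F using Finset.induction_on with
  | empty => rwa [show ⨆ i ∈ (∅ : Finset ι), S i = ⊥ by simp, sup_bot_eq]
  | insert j F hjF ih =>
    obtain ⟨e, he⟩ := hSe j
    have hdisj : Disjoint (S j) ((⨆ i ∈ F, S i) ⊔ B) :=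
      (hS.disjoint_biSup hjF).disjoint_sup_right_of_disjoint_sup_left
        (hSB.mono_left (sup_le (le_iSup S j) (iSup₂_le fun i _ => le_iSup S i)))
    rw [Finset.iSup_insert, sup_left_comm]
    exact isClippedFor_sup hτ (sup_comm (⨆ i ∈ F, S i) B ▸ hdisj) he (hSτ j) ih

theorem exists_finset_mem_sup_biSup (hSA : ⨆ i, S i = A) (hAB : IsCompl A B) (x : G) :
    ∃ F : Finset ι, x ∈ B ⊔ ⨆ i ∈ F, S i := by
  obtain ⟨a, ha, b, hb, rfl⟩ := AddSubgroup.mem_sup.1 (hAB.sup_eq_top ▸ AddSubgroup.mem_top x)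
  have hdir : Directed (· ≤ ·) fun F : Finset ι => ⨆ i ∈ F, S i :=
    Monotone.directed_le fun F F' h => biSup_mono fun _ hi => Finset.mem_of_subset h hi
  rw [← hSA, iSup_eq_iSup_finset, AddSubgroup.mem_iSup_of_directed hdir] at ha
  obtain ⟨F, hF⟩ := ha
  exact ⟨F, add_mem (AddSubgroup.mem_sup_right hF) (AddSubgroup.mem_sup_left hb)⟩

theorem IsCompletelyDecomposable.exists_iSupIndep (hA : IsCompletelyDecomposable A) :
    ∃ (ι : Type) (S : ι → AddSubgroup G),
      iSupIndep S ∧ ⨆ i, S i = A ∧ ∀ i, ∃ e : S i →+ ℚ, Injective e := by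
  classical
  obtain ⟨ι, τs, -, ⟨ψ⟩⟩ := hA
  set f : (⨁ i, τs i) →+ G := A.subtype.comp ψ.symm.toAddMonoidHom
  have hf : Injective f := A.subtype_injective.comp ψ.symm.injective
  refine ⟨ι, fun i => (f.comp (of _ i)).range, iSupIndep_range_comp_of hf, ?_, fun i => ?_⟩
  · rw [iSup_range_comp_of]
    ext x
    exact ⟨fun ⟨y, hy⟩ => hy ▸ (ψ.symm y).2, fun hx => ⟨ψ ⟨x, hx⟩, by simp [f]⟩⟩
  · let eS := AddMonoidHom.ofInjective (f := f.comp (of _ i)) (hf.comp (of_injective i))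
    exact ⟨(τs i).subtype.comp eS.symm.toAddMonoidHom,
      (τs i).subtype_injective.comp eS.symm.injective⟩

end Independent

/-- If `G = A ⊕ B` with `A` completely decomposable and both `A`
and `B` τ-clipped, then `G` is τ-clipped. -/
theorem statement3 (G : Type*) [AddCommGroup G] [NoZeroSMulDivisors ℤ G]
    (A B : AddSubgroup G) (τ : AddSubgroup ℚ) (hτ : τ ≠ ⊥)
    (h : IsCompl A B) (hA : IsCompletelyDecomposable A)
    (hA2 : IsClippedFor A τ) (hB : IsClippedFor B τ) :
    IsClippedFor G τ := by
  obtain ⟨ι, S, hS, hSA, hSe⟩ := hA.exists_iSupIndep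
  have hSτ : ∀ i, IsEmpty (S i ≃+ τ) := fun i =>
    hA2.isEmpty_addEquiv (hS i) (by rw [← iSup_split_single, hSA])
  rintro ⟨C, ⟨D, hCD⟩, ⟨φ⟩⟩
  obtain ⟨t, ht⟩ := AddSubgroup.ne_bot_iff_exists_ne_zero.1 hτ
  obtain ⟨F, hF⟩ := exists_finset_mem_sup_biSup hSA h (φ.symm t : G)
  have hCF : C ≤ B ⊔ ⨆ i ∈ F, S i :=
    le_of_mem_of_isCompl (isCompl_sup_biSup hS hSA h F) (e := τ.subtype.comp φ.toAddMonoidHom)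
      (τ.subtype_injective.comp φ.injective) (by simpa using ht) hF
  exact ((isClippedFor_sup_biSup hτ hS hSe hSτ (hSA ▸ h.disjoint) hB F).isEmpty_addEquiv_of_le
    hCD hCF).false φ

end Paper
end

section
/- For an infinite cardinal κ, the Specker group ℤ^κ is not clipped but has no clipped direct summand; in particular ℤ^κ has no Main Decomposition. -/
namespace Paper

open DirectSum

/-!
A nonzero homomorphism `f : G →+ ℤ`, divided by a generator of its image so that `f y = 1`,
splits off the rank-one summand `ℤ y` with complement `ker f`. Coordinate projections provide such
homomorphisms on every nonzero subgroup of `ℤ^ι`, so no nonzero summand of `ℤ^ι` is clipped, and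
a Main Decomposition would make `ℤ^ι` itself completely decomposable, `ℤ^ι ≅ ⨁ τ_j`.

A nonzero homomorphism from a subgroup of `ℚ` to a torsion-free group is injective, so each `τ_j`
embeds in `ℤ` and `ℤ^ℕ ⊆ ℤ^ι` would embed in `⨁_J ℤ`. Specker's argument excludes this: a
homomorphism `ℤ^ℕ → ℤ` killing the unit vectors kills every `x` with `2^k ∣ x k`, so the `2^ℵ₀`
vectors `∑_{k ∈ T} 2^k e_k` would all land in the countable group of finitely supported functions
on the countably many coordinates met by the images of unit vectors.
-/

open Function

section Summands

variable {G : Type*} [AddCommGroup G]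

lemma isCompl_zmultiples_ker {f : G →+ ℤ} {y : G} (hy : f y = 1) :
    IsCompl (AddSubgroup.zmultiples y) f.ker := by
  constructor
  · rw [AddSubgroup.disjoint_def]
    rintro _ ⟨n, rfl⟩ hn
    have : n = 0 := by simpa [hy] using hn
    simp [this]
  · rw [codisjoint_iff, eq_top_iff]
    intro x _
    refine AddSubgroup.mem_sup.mpr ⟨f x • y, ⟨f x, rfl⟩, x - f x • y, ?_, by abel⟩
    simp [AddMonoidHom.mem_ker, hy]

lemma isRankOne_zmultiples {f : G →+ ℤ} {y : G} (hy : f y = 1) :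
    IsRankOne (AddSubgroup.zmultiples y) := by
  refine ⟨⟨⟨y, AddSubgroup.mem_zmultiples y⟩, ?_⟩,
    (Int.castAddHom ℚ).comp (f.comp (AddSubgroup.zmultiples y).subtype), ?_⟩
  · intro h
    simpa [hy] using congrArg (f ∘ Subtype.val) h
  · rintro ⟨_, m, rfl⟩ ⟨_, n, rfl⟩ h
    have : m = n := by simpa [hy] using h
    simp [this]

lemma exists_addMonoidHom_int_apply_eq_one {f : G →+ ℤ} (hf : f ≠ 0) :
    ∃ (g : G →+ ℤ) (y : G), g y = 1 := by
  obtain ⟨d, hd⟩ := Int.subgroup_cyclic f.range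
  rw [← AddSubgroup.zmultiples_eq_closure] at hd
  have hdvd : ∀ x, d ∣ f x := fun x => by
    have hx : f x ∈ AddSubgroup.zmultiples d := hd ▸ ⟨x, rfl⟩
    obtain ⟨k, hk⟩ := hx
    exact ⟨k, by rw [← hk]; exact mul_comm k d⟩
  obtain ⟨y, hy⟩ : d ∈ f.range := hd ▸ AddSubgroup.mem_zmultiples d
  have hd0 : d ≠ 0 := by
    rintro rfl
    exact hf (AddMonoidHom.ext fun x => zero_dvd_iff.mp (hdvd x))
  refine ⟨AddMonoidHom.mk' (fun x => f x / d) fun a b => ?_, y, ?_⟩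
  · rw [map_add, Int.add_ediv_of_dvd_left (hdvd a)]
  · simp [hy, hd0]

theorem not_isClipped_of_ne_zero {f : G →+ ℤ} (hf : f ≠ 0) : ¬ IsClipped G := by
  obtain ⟨g, y, hy⟩ := exists_addMonoidHom_int_apply_eq_one hf
  exact fun h => h ⟨_, ⟨_, isCompl_zmultiples_ker hy⟩, isRankOne_zmultiples hy⟩

end Summands

theorem not_isClipped_of_ne_bot {ι : Type*} {S : AddSubgroup (ι → ℤ)} (hS : S ≠ ⊥) :
    ¬ IsClipped S := by
  obtain ⟨⟨x, hxS⟩, hx0⟩ := (AddSubgroup.ne_bot_iff_exists_ne_zero).mp hS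
  obtain ⟨i, hi⟩ : ∃ i, x i ≠ 0 := Function.ne_iff.mp fun h => hx0 (Subtype.ext h)
  refine not_isClipped_of_ne_zero (f := (Pi.evalAddMonoidHom _ i).comp S.subtype) fun h => hi ?_
  simpa using DFunLike.congr_fun h ⟨x, hxS⟩

theorem injective_of_ne_zero_of_addSubgroup_rat {τ : AddSubgroup ℚ} {M : Type*} [AddCommGroup M]
    [IsAddTorsionFree M] {f : τ →+ M} (hf : f ≠ 0) : Injective f := by
  obtain ⟨t, ht⟩ := DFunLike.ne_iff.mp hf
  refine (injective_iff_map_eq_zero f).mpr fun s hs => ?_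
  by_contra hs0
  have hnum : (s : ℚ).num ≠ 0 := Rat.num_ne_zero.mpr fun h => hs0 (Subtype.ext h)
  -- both sides equal `s.num * t.num`
  have hrel : ((s : ℚ).den * (t : ℚ).num : ℤ) • s = ((s : ℚ).num * (t : ℚ).den : ℤ) • t := by
    apply Subtype.ext
    simp only [AddSubgroup.coe_zsmul, zsmul_eq_mul, Int.cast_mul, Int.cast_natCast]
    linear_combination ((t : ℚ).num : ℚ) * Rat.mul_den_eq_num (s : ℚ) -
      ((s : ℚ).num : ℚ) * Rat.mul_den_eq_num (t : ℚ)
  have := congrArg f hrel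
  have hcoef : (s : ℚ).num * (t : ℚ).den ≠ 0 := mul_ne_zero hnum (by exact_mod_cast (t : ℚ).den_nz)
  rw [map_zsmul, map_zsmul, hs, smul_zero, eq_comm,
    IsAddTorsionFree.zsmul_eq_zero_iff_right hcoef] at this
  exact ht (by simpa using this)

theorem exists_injective_int_of_injective_pi {τ : AddSubgroup ℚ} {ι : Type*}
    {F : τ →+ (ι → ℤ)} (hF : Injective F) : ∃ ψ : τ →+ ℤ, Injective ψ := by
  by_cases h : ∃ i, (Pi.evalAddMonoidHom _ i).comp F ≠ 0
  · obtain ⟨i, hi⟩ := h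
    exact ⟨_, injective_of_ne_zero_of_addSubgroup_rat hi⟩
  · push Not at h
    exact ⟨0, fun a b _ => hF (funext fun i =>
      (DFunLike.congr_fun (h i) a).trans (DFunLike.congr_fun (h i) b).symm)⟩

section Specker

variable {h : (ℕ → ℤ) →+ ℤ}

theorem map_eq_zero_of_forall_le (hh : ∀ n, h (Pi.single n 1) = 0) {N : ℕ} {y : ℕ → ℤ}
    (hy : ∀ k, N ≤ k → y k = 0) : h y = 0 := by
  have hsum : y = ∑ k ∈ Finset.range N, y k • Pi.single k 1 := by
    funext k
    rcases lt_or_ge k N with hk | hk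
    · simp [Finset.sum_apply, Pi.single_apply, hk]
    · simp [Finset.sum_apply, Pi.single_apply, hy k hk, not_lt.mpr hk]
  rw [hsum, map_sum]
  exact Finset.sum_eq_zero fun k _ => by rw [map_zsmul, hh, smul_zero]

theorem map_eq_zero_of_forall_two_pow_dvd (hh : ∀ n, h (Pi.single n 1) = 0) {x : ℕ → ℤ}
    (hx : ∀ k, 2 ^ k ∣ x k) : h x = 0 := by
  have hdvd : ∀ N : ℕ, (2 : ℤ) ^ N ∣ h x := by
    intro N
    let w : ℕ → ℤ := fun k => if k < N then 0 else x k / 2 ^ N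
    have hfin : h (x - (2 ^ N : ℤ) • w) = 0 := map_eq_zero_of_forall_le hh (N := N) fun k hk => by
      simp [w, not_lt.mpr hk, Int.mul_ediv_cancel' ((pow_dvd_pow 2 hk).trans (hx k))]
    rw [map_sub, sub_eq_zero, map_zsmul] at hfin
    exact ⟨h w, hfin⟩
  exact Int.eq_zero_of_dvd_of_natAbs_lt_natAbs (hdvd (h x).natAbs)
    (by simpa [Int.natAbs_pow] using Nat.lt_two_pow_self)

end Specker

theorem not_injective_pi_nat_to_dfinsupp {J : Type*} (F : (ℕ → ℤ) →+ Π₀ _ : J, ℤ) :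
    ¬ Injective F := by
  classical
  intro hF
  set K : Set J := ⋃ n, {j | F (Pi.single n 1) j ≠ 0}
  have hK : K.Countable := Set.countable_iUnion fun n => (DFinsupp.finite_support _).countable
  let x : Set ℕ → ℕ → ℤ := fun T => T.indicator (2 ^ ·)
  have hx : Injective x := fun T T' h => Set.ext fun k => by
    simpa [x, Set.indicator_apply_ne_zero] using congrArg (· k ≠ 0) h
  have hvanish : ∀ T, ∀ j ∉ K, F (x T) j = 0 := by
    intro T j hj
    refine map_eq_zero_of_forall_two_pow_dvd (h := (DFinsupp.evalAddMonoidHom j).comp F)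
      (fun n => ?_) fun k => ?_
    · by_contra hn
      exact hj (Set.mem_iUnion.mpr ⟨n, hn⟩)
    · by_cases hk : k ∈ T <;> simp [x, hk]
  have hrestrict : Injective fun T => (F (x T)).subtypeDomain (· ∈ K) := by
    intro T T' h
    refine hx (hF (DFinsupp.ext fun j => ?_))
    by_cases hj : j ∈ K
    · exact DFunLike.congr_fun h ⟨j, hj⟩
    · rw [hvanish T j hj, hvanish T' j hj]
  have := hK.to_subtype
  obtain ⟨e, he⟩ := Countable.exists_injective_nat (Π₀ _ : K, ℤ)
  exact cantor_injective _ (he.comp hrestrict)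

theorem not_isCompletelyDecomposable_pi_int (ι : Type) [Infinite ι] :
    ¬ IsCompletelyDecomposable (ι → ℤ) := by
  rintro ⟨J, τ, -, ⟨φ⟩⟩
  classical
  have hψ (j : J) : ∃ ψ : τ j →+ ℤ, Injective ψ :=
    exists_injective_int_of_injective_pi
      (F := φ.symm.toAddMonoidHom.comp (DirectSum.of (fun j => τ j) j))
      (φ.symm.injective.comp (DirectSum.of_injective j))
  choose ψ hψ using hψ
  let e : ℕ ↪ ι := Infinite.natEmbedding ι
  refine not_injective_pi_nat_to_dfinsupp ((DFinsupp.mapRange.addMonoidHom ψ).comp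
    (φ.toAddMonoidHom.comp (ExtendByZero.hom ℤ e))) ?_
  have hmap : Injective (DFinsupp.mapRange.addMonoidHom ψ) :=
    (DFinsupp.mapRange_injective (fun j => ψ j) fun j => map_zero (ψ j)).mpr hψ
  exact hmap.comp (φ.injective.comp (extend_injective e.injective 0))

/-- For an infinite index set, the Specker group `ℤ^ι` is not
clipped, has no nonzero clipped direct summand, and has no Main
Decomposition. -/
theorem statement11 (ι : Type) [Infinite ι] :
    ¬ IsClipped (ι → ℤ) ∧
    (∀ S : AddSubgroup (ι → ℤ), IsSummand S → IsClipped S → S = ⊥) ∧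
    ¬ ∃ A H : AddSubgroup (ι → ℤ), IsCompl A H ∧
        IsCompletelyDecomposable A ∧ IsClipped H := by
  have eq_bot_of_isClipped (S : AddSubgroup (ι → ℤ)) (hS : IsClipped S) : S = ⊥ :=
    by_contra fun h => not_isClipped_of_ne_bot h hS
  refine ⟨?_, fun S _ hS => eq_bot_of_isClipped S hS, ?_⟩
  · obtain ⟨i⟩ := Infinite.nonempty ι
    refine not_isClipped_of_ne_zero (f := Pi.evalAddMonoidHom _ i) fun h => ?_
    simpa using DFunLike.congr_fun h 1
  · rintro ⟨A, H, hAH, ⟨J, τ, hτ, ⟨φ⟩⟩, hH⟩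
    obtain rfl := eq_bot_of_isClipped H hH
    obtain rfl : A = ⊤ := codisjoint_bot.mp hAH.codisjoint
    exact not_isCompletelyDecomposable_pi_int ι ⟨J, τ, hτ, ⟨AddSubgroup.topEquiv.symm.trans φ⟩⟩

end Paper
end

section
/- Stein's theorem: every countable torsion-free abelian group G decomposes as G = F ⊕ H where F is free and Hom(H, ℤ) = 0. -/
/-!
Let `K` be the intersection of the kernels of all functionals `M → R`, over a PID `R`. The
quotient `M ⧸ K` is separated by its functionals. If it is countable, enumerate it as
`x₀, x₁, …` and let `Cₙ` be the saturation of `⟨x₀, …, xₙ₋₁⟩`. The restrictions of all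
functionals to a finitely generated submodule `S` span a submodule of the noetherian module
`Dual R S`, so finitely many of them already separate `S`, and then also its saturation; hence
each `Cₙ` embeds into some `Rᵏ` and is finitely generated. So `Cₙ₊₁ / Cₙ` is finitely generated
and torsion-free, hence free, and `M ⧸ K ≅ ⨁ₙ Cₙ₊₁ / Cₙ` is free. A free quotient splits,
`M = F ⊕ K` with `F ≅ M ⧸ K`, and a functional on `K` extends along the projection to a
functional on `M`, which vanishes on `K`.
-/

open Module

section Saturation

variable {R M : Type*} [CommRing R] [IsDomain R] [AddCommGroup M] [Module R M]

def Submodule.saturation (S : Submodule R M) : Submodule R M where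
  carrier := {x | ∃ a : R, a ≠ 0 ∧ a • x ∈ S}
  zero_mem' := ⟨1, one_ne_zero, by simp⟩
  add_mem' := by
    rintro x y ⟨a, ha, hx⟩ ⟨b, hb, hy⟩
    refine ⟨b * a, mul_ne_zero hb ha, ?_⟩
    rw [smul_add, mul_smul, mul_comm, mul_smul]
    exact add_mem (S.smul_mem b hx) (S.smul_mem a hy)
  smul_mem' := by
    rintro c x ⟨a, ha, hx⟩
    exact ⟨a, ha, by rw [smul_comm]; exact S.smul_mem c hx⟩

namespace Submodule

variable {S T : Submodule R M}

theorem le_saturation (S : Submodule R M) : S ≤ S.saturation :=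
  fun x hx => ⟨1, one_ne_zero, by rwa [one_smul]⟩

theorem saturation_mono (h : S ≤ T) : S.saturation ≤ T.saturation :=
  fun _ ⟨a, ha, hx⟩ => ⟨a, ha, h hx⟩

theorem saturation_bot [IsTorsionFree R M] : (⊥ : Submodule R M).saturation = ⊥ :=
  eq_bot_iff.2 fun _ ⟨_, ha, hx⟩ => (smul_eq_zero_iff_right ha).1 hx

instance isTorsionFree_quotient_saturation (S : Submodule R M) :
    IsTorsionFree R (M ⧸ S.saturation) := by
  refine .of_smul_eq_zero fun r q h => or_iff_not_imp_left.2 fun hr => ?_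
  induction q using Quotient.induction_on with | _ x
  rw [← Quotient.mk_smul, Quotient.mk_eq_zero] at h
  rw [Quotient.mk_eq_zero]
  obtain ⟨a, ha, hx⟩ := h
  exact ⟨a * r, mul_ne_zero ha hr, by rwa [mul_smul]⟩

end Submodule

end Saturation

section Separating

variable {R M : Type*} [CommRing R] [IsDomain R] [AddCommGroup M] [Module R M]

theorem Module.isTorsionFree_of_separating
    (hsep : ∀ x : M, x ≠ 0 → ∃ φ : Dual R M, φ x ≠ 0) : IsTorsionFree R M := by
  refine .of_smul_eq_zero fun r x h => or_iff_not_imp_right.2 fun hx => ?_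
  obtain ⟨φ, hφ⟩ := hsep x hx
  simpa [hφ] using congrArg φ h

variable [IsPrincipalIdealRing R]

open Submodule in
theorem Submodule.exists_finset_dual_separating_of_fg
    (hsep : ∀ x : M, x ≠ 0 → ∃ φ : Dual R M, φ x ≠ 0) {S : Submodule R M} (hS : S.FG) :
    ∃ t : Finset (Dual R M), ∀ x ∈ S, (∀ φ ∈ t, φ x = 0) → x = 0 := by
  have := isTorsionFree_of_separating hsep
  have : Module.Finite R S := Module.Finite.iff_fg.2 hS
  let restrict : Dual R M →ₗ[R] Dual R S := S.subtype.dualMap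
  have hrange : LinearMap.range restrict ≤ ⨆ φ, R ∙ restrict φ := by
    rintro _ ⟨φ, rfl⟩
    exact mem_iSup_of_mem φ (mem_span_singleton_self _)
  obtain ⟨t, ht⟩ := CompleteLattice.IsCompactElement.exists_finset_of_le_iSup _
    ((fg_iff_compact _).1 (IsNoetherian.noetherian _)) _ hrange
  refine ⟨t, fun x hx hxt => by_contra fun hx0 => ?_⟩
  obtain ⟨ψ, hψ⟩ := hsep x hx0
  have hker : LinearMap.range restrict ≤ LinearMap.ker (Dual.eval R S ⟨x, hx⟩) :=
    ht.trans (iSup₂_le fun φ hφ => (span_singleton_le_iff_mem _ _).2 (hxt φ hφ))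
  exact hψ (hker ⟨ψ, rfl⟩)

theorem Submodule.finite_saturation_of_separating
    (hsep : ∀ x : M, x ≠ 0 → ∃ φ : Dual R M, φ x ≠ 0) {S : Submodule R M} (hS : S.FG) :
    Module.Finite R S.saturation := by
  have := isTorsionFree_of_separating hsep
  obtain ⟨t, ht⟩ := exists_finset_dual_separating_of_fg hsep hS
  let ev : S.saturation →ₗ[R] (t → R) :=
    LinearMap.pi fun φ => (φ : Dual R M) ∘ₗ S.saturation.subtype
  have hinj : Function.Injective ev := by
    rw [← LinearMap.ker_eq_bot, eq_bot_iff]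
    rintro ⟨x, a, ha, hax⟩ hx
    have hφ : ∀ φ ∈ t, φ x = 0 := fun φ hφ => congrFun hx ⟨φ, hφ⟩
    have : a • x = 0 := ht _ hax fun φ hφ' => by rw [map_smul, hφ φ hφ', smul_zero]
    exact Subtype.ext ((smul_eq_zero_iff_right ha).1 this)
  exact Module.Finite.of_injective ev hinj

end Separating

section Filtration

variable {R M : Type*} [Ring R] [AddCommGroup M] [Module R M]

open Submodule in
theorem Submodule.exists_le_disjoint_le_sup_of_projective {N P : Submodule R M}
    [Projective R (P.map N.mkQ)] :
    ∃ D ≤ P, Disjoint N D ∧ P ≤ N ⊔ D ∧ Nonempty (D ≃ₗ[R] P.map N.mkQ) := by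
  obtain ⟨g, hg⟩ := projective_lifting_property (N.mkQ.submoduleMap P) LinearMap.id
    (N.mkQ.submoduleMap_surjective P)
  have hmkQ : ∀ y, N.mkQ (g y) = y := fun y => congrArg Subtype.val (LinearMap.congr_fun hg y)
  have hinj : Function.Injective (P.subtype ∘ₗ g) := fun y z h => by
    simpa [hmkQ] using congrArg N.mkQ h
  refine ⟨LinearMap.range (P.subtype ∘ₗ g), ?_, ?_, ?_,
    ⟨(LinearEquiv.ofInjective _ hinj).symm⟩⟩
  · rintro _ ⟨y, rfl⟩
    exact (g y).2
  · rw [disjoint_def]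
    rintro _ hN ⟨y, rfl⟩
    rw [← Quotient.mk_eq_zero, ← mkQ_apply] at hN
    simp only [LinearMap.comp_apply, subtype_apply, hmkQ] at hN ⊢
    rw [show y = 0 from Subtype.ext hN, map_zero, ZeroMemClass.coe_zero]
  · intro x hx
    let y : P.map N.mkQ := N.mkQ.submoduleMap P ⟨x, hx⟩
    have hxy : x - g y ∈ N := by
      rw [← Quotient.mk_eq_zero, ← mkQ_apply, map_sub, hmkQ]
      exact sub_self _
    exact mem_sup.2 ⟨_, hxy, _, ⟨y, rfl⟩, sub_add_cancel x _⟩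

theorem Submodule.exists_isCompl_of_projective {N : Submodule R M} [Projective R (M ⧸ N)] :
    ∃ D, IsCompl N D ∧ Nonempty (D ≃ₗ[R] M ⧸ N) := by
  let e : (⊤ : Submodule R M).map N.mkQ ≃ₗ[R] M ⧸ N :=
    LinearEquiv.ofTop _ (by rw [map_top, range_mkQ])
  have : Projective R ((⊤ : Submodule R M).map N.mkQ) := Projective.of_equiv e.symm
  obtain ⟨D, -, hdisj, hsup, ⟨f⟩⟩ :=
    exists_le_disjoint_le_sup_of_projective (N := N) (P := ⊤)
  exact ⟨D, ⟨hdisj, codisjoint_iff.2 (eq_top_iff.2 hsup)⟩, ⟨f.trans e⟩⟩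

theorem iSupIndep_of_disjoint_of_le_succ {C D : ℕ → Submodule R M} (hC : Monotone C)
    (hDC : ∀ n, D n ≤ C (n + 1)) (hdisj : ∀ n, Disjoint (C n) (D n)) : iSupIndep D := by
  classical
  rw [iSupIndep_iff_finsetSum_eq_zero_imp_eq_zero]
  intro s v hv
  induction s using Finset.induction_on_max with
  | empty => simp
  | insert m s hlt ih =>
    rw [Finset.sum_insert fun h => (hlt m h).false]
    intro hsum
    have hsC : ∑ i ∈ s, v i ∈ C m :=
      sum_mem fun i hi => hC (hlt i hi) (hDC i (hv i (Finset.mem_insert_of_mem hi)))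
    have hvm : v m = 0 := by
      refine Submodule.disjoint_def.1 (hdisj m) _ ?_ (hv m (Finset.mem_insert_self m s))
      rw [eq_neg_of_add_eq_zero_left hsum]
      exact neg_mem hsC
    rw [hvm, zero_add] at hsum
    simpa [hvm] using ih (fun i hi => hv i (Finset.mem_insert_of_mem hi)) hsum

theorem Module.free_of_free_subquotients (C : ℕ → Submodule R M) (hC : Monotone C)
    (hbot : C 0 = ⊥) (htop : ⨆ n, C n = ⊤)
    (hfree : ∀ n, Free R ((C (n + 1)).map (C n).mkQ)) :
    Free R M := by
  choose D hDC hdisj hsup e using fun n =>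
    Submodule.exists_le_disjoint_le_sup_of_projective (N := C n) (P := C (n + 1))
  have hle : ∀ n, C n ≤ ⨆ i, D i := by
    intro n
    induction n with
    | zero => simp [hbot]
    | succ n ih => exact (hsup n).trans (sup_le ih (le_iSup D n))
  have hDtop : ⨆ n, D n = ⊤ := eq_top_iff.2 (htop ▸ iSup_le hle)
  have := fun n => Free.of_equiv (e n).some.symm
  exact Free.of_basis <| (DirectSum.isInternal_submodule_of_iSupIndep_of_iSup_eq_top
    (iSupIndep_of_disjoint_of_le_succ hC hDC hdisj) hDtop).collectedBasis
    fun n => Free.chooseBasis R (D n)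

end Filtration

section Dual

variable {R M : Type*} [CommRing R] [AddCommGroup M] [Module R M]

open Submodule in
theorem Module.separating_quotient_iInf_ker (q : M ⧸ ⨅ φ : Dual R M, LinearMap.ker φ)
    (hq : q ≠ 0) : ∃ ψ : Dual R (M ⧸ ⨅ φ : Dual R M, LinearMap.ker φ), ψ q ≠ 0 := by
  induction q using Quotient.induction_on with | _ x
  obtain ⟨φ, hφ⟩ : ∃ φ : Dual R M, φ x ≠ 0 := by
    simpa [Quotient.mk_eq_zero, mem_iInf] using hq
  exact ⟨liftQ _ φ (iInf_le _ φ), hφ⟩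

theorem Module.dual_iInf_ker_eq_zero_of_isCompl {D : Submodule R M}
    (h : IsCompl (⨅ φ : Dual R M, LinearMap.ker φ) D)
    (f : Dual R ↥(⨅ φ : Dual R M, LinearMap.ker φ)) : f = 0 := by
  ext ⟨x, hx⟩
  have := (Submodule.mem_iInf _).1 hx (f ∘ₗ Submodule.projectionOnto _ D h)
  rwa [LinearMap.mem_ker, LinearMap.comp_apply,
    show x = ((⟨x, hx⟩ : ↥(⨅ φ : Dual R M, LinearMap.ker φ)) : M) from rfl,
    Submodule.projectionOnto_apply_left] at this

end Dual

section Countable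

variable {R M : Type*} [CommRing R] [IsDomain R] [IsPrincipalIdealRing R] [AddCommGroup M]
  [Module R M] [Countable M]

open Submodule in
theorem Module.free_of_countable_of_separating
    (hsep : ∀ x : M, x ≠ 0 → ∃ φ : Dual R M, φ x ≠ 0) : Free R M := by
  have := isTorsionFree_of_separating hsep
  obtain ⟨e, he⟩ := exists_surjective_nat M
  let C : ℕ → Submodule R M := fun n => (span R (e '' Set.Iio n)).saturation
  refine free_of_free_subquotients C
    (fun m n h => saturation_mono (span_mono (Set.image_mono (Set.Iio_subset_Iio h)))) ?_ ?_
    fun n => ?_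
  · simp [C, saturation_bot]
  · refine eq_top_iff.2 fun x _ => ?_
    obtain ⟨i, rfl⟩ := he x
    exact mem_iSup_of_mem (i + 1) (le_saturation _ (subset_span ⟨i, by simp, rfl⟩))
  · have : Module.Finite R (C (n + 1)) :=
      finite_saturation_of_separating hsep (fg_span ((Set.finite_Iio _).image e))
    infer_instance

theorem Module.exists_free_isCompl_iInf_ker :
    ∃ F : Submodule R M, IsCompl F (⨅ φ : Dual R M, LinearMap.ker φ) ∧ Free R F ∧
      ∀ f : Dual R ↥(⨅ φ : Dual R M, LinearMap.ker φ), f = 0 := by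
  set K : Submodule R M := ⨅ φ : Dual R M, LinearMap.ker φ
  have : Countable (M ⧸ K) := (Submodule.mkQ_surjective K).countable
  have : Free R (M ⧸ K) := free_of_countable_of_separating separating_quotient_iInf_ker
  obtain ⟨F, hF, ⟨e⟩⟩ := Submodule.exists_isCompl_of_projective (N := K)
  exact ⟨F, hF.symm, Free.of_equiv e.symm, dual_iInf_ker_eq_zero_of_isCompl hF⟩

end Countable

namespace Paper

theorem statement12_general (G : Type*) [AddCommGroup G] [Countable G] :
    ∃ F H : AddSubgroup G, IsCompl F H ∧ Module.Free ℤ F ∧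
      ∀ f : H →+ ℤ, f = 0 := by
  obtain ⟨F, hF, hfree, hdual⟩ := exists_free_isCompl_iInf_ker (R := ℤ) (M := G)
  refine ⟨F.toAddSubgroup, (⨅ φ : Dual ℤ G, LinearMap.ker φ).toAddSubgroup,
    AddSubgroup.toIntSubmodule.symm.isCompl_iff.1 hF, hfree, fun f => ?_⟩
  ext x
  exact LinearMap.congr_fun (hdual f.toIntLinearMap) x

/-- Stein: every countable torsion-free abelian group
decomposes as `F ⊕ H` with `F` free and `Hom(H, ℤ) = 0`. -/
theorem statement12 (G : Type*) [AddCommGroup G] [Countable G]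
    [NoZeroSMulDivisors ℤ G] :
    ∃ F H : AddSubgroup G, IsCompl F H ∧ Module.Free ℤ F ∧
      ∀ f : H →+ ℤ, f = 0 :=
  statement12_general G

end Paper
end

section
/- Let p_n, q_n, r_n (n ∈ ℤ) be distinct primes and let b_n, c_n be a basis of a ℚ-vector space. With Corner's group G = B ⊕ C where B = ⟨p_n^{-∞} b_n, q_n^{-1}(b_n + b_{n+1})⟩ and C = ⟨p_n^{-∞} c_n, r_n^{-1}(c_n + c_{n+1})⟩, choose integers α_n with α_n ≡ 0 (mod q_{n-1} q_n) and α_n ≡ −1 (mod r_{n-1} r_n), and set t_n = (1+α_n) b_n − α_n c_n and z_n = α_n b_n − (1−α_n) c_n. Then t_n + t_{n+1} is divisible by q_n r_n in G for every n ∈ ℤ. -/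
namespace Paper

open DirectSum

/-- In Corner's second example, `t n + t (n+1)` is divisible by
`q n * r n` inside `G = B ⊔ C`. -/
theorem statement14 (V : Type*) [AddCommGroup V] [Module ℚ V]
    (b c : ℤ → V) (hli : LinearIndependent ℚ (Sum.elim b c))
    (pp qq rr : ℤ → ℕ)
    (hpp : ∀ n, (pp n).Prime) (hqq : ∀ n, (qq n).Prime) (hrr : ∀ n, (rr n).Prime)
    (hdist : Function.Injective (Sum.elim pp (Sum.elim qq rr) : ℤ ⊕ (ℤ ⊕ ℤ) → ℕ))
    (B C : AddSubgroup V)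
    (hB : B = AddSubgroup.closure
      ({x | ∃ (n : ℤ) (k : ℕ), x = ((pp n : ℚ) ^ k)⁻¹ • b n} ∪
       {x | ∃ n : ℤ, x = ((qq n : ℚ))⁻¹ • (b n + b (n + 1))}))
    (hC : C = AddSubgroup.closure
      ({x | ∃ (n : ℤ) (k : ℕ), x = ((pp n : ℚ) ^ k)⁻¹ • c n} ∪
       {x | ∃ n : ℤ, x = ((rr n : ℚ))⁻¹ • (c n + c (n + 1))}))
    (α : ℤ → ℤ)
    (hα1 : ∀ n : ℤ, ((qq (n - 1) : ℤ) * (qq n : ℤ)) ∣ α n)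
    (hα2 : ∀ n : ℤ, ((rr (n - 1) : ℤ) * (rr n : ℤ)) ∣ (α n + 1))
    (t z : ℤ → V)
    (ht : ∀ n, t n = (1 + α n) • b n - (α n) • c n)
    (hz : ∀ n, z n = (α n) • b n - (1 - α n) • c n) :
    ∀ n : ℤ, ∃ g ∈ B ⊔ C, ((qq n : ℤ) * (rr n : ℤ)) • g = t n + t (n + 1) := by
  intro n
  -- divisibilities
  obtain ⟨a1, ha1⟩ : (qq n : ℤ) ∣ α n := (dvd_mul_left _ _).trans (hα1 n)
  obtain ⟨a2, ha2⟩ : (qq n : ℤ) ∣ α (n + 1) := by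
    have h := hα1 (n + 1)
    simp only [add_sub_cancel_right] at h
    exact (dvd_mul_right _ _).trans h
  obtain ⟨d1, hd1⟩ : (rr n : ℤ) ∣ α n + 1 := (dvd_mul_left _ _).trans (hα2 n)
  obtain ⟨d2, hd2⟩ : (rr n : ℤ) ∣ α (n + 1) + 1 := by
    have h := hα2 (n + 1)
    simp only [add_sub_cancel_right] at h
    exact (dvd_mul_right _ _).trans h
  have hq0 : (qq n : ℚ) ≠ 0 := Nat.cast_ne_zero.mpr (hqq n).ne_zero
  have hr0 : (rr n : ℚ) ≠ 0 := Nat.cast_ne_zero.mpr (hrr n).ne_zero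
  -- membership facts
  have hbB : ∀ m : ℤ, b m ∈ B := by
    intro m
    rw [hB]
    apply AddSubgroup.subset_closure
    exact Or.inl ⟨m, 0, by simp⟩
  have hcC : ∀ m : ℤ, c m ∈ C := by
    intro m
    rw [hC]
    apply AddSubgroup.subset_closure
    exact Or.inl ⟨m, 0, by simp⟩
  have hqB : ((qq n : ℚ))⁻¹ • (b n + b (n + 1)) ∈ B := by
    rw [hB]; exact AddSubgroup.subset_closure (Or.inr ⟨n, rfl⟩)
  have hrC : ((rr n : ℚ))⁻¹ • (c n + c (n + 1)) ∈ C := by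
    rw [hC]; exact AddSubgroup.subset_closure (Or.inr ⟨n, rfl⟩)
  have hbG : ∀ m : ℤ, b m ∈ B ⊔ C := fun m => AddSubgroup.mem_sup_left (hbB m)
  have hcG : ∀ m : ℤ, c m ∈ C → c m ∈ B ⊔ C := fun m h => AddSubgroup.mem_sup_right h
  -- the witnesses
  set u : V := ((qq n : ℚ))⁻¹ • (b n + b (n + 1)) + a1 • (b n - c n) +
      a2 • (b (n + 1) - c (n + 1)) with hu_def
  set w : V := ((rr n : ℚ))⁻¹ • (c n + c (n + 1)) + d1 • (b n - c n) +
      d2 • (b (n + 1) - c (n + 1)) with hw_def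
  have huG : u ∈ B ⊔ C := by
    refine add_mem (add_mem (AddSubgroup.mem_sup_left hqB) ?_) ?_ <;>
      exact zsmul_mem (sub_mem (hbG _) (AddSubgroup.mem_sup_right (hcC _))) _
  have hwG : w ∈ B ⊔ C := by
    refine add_mem (add_mem (AddSubgroup.mem_sup_right hrC) ?_) ?_ <;>
      exact zsmul_mem (sub_mem (hbG _) (AddSubgroup.mem_sup_right (hcC _))) _
  have hqinv : (qq n : ℤ) • (((qq n : ℚ))⁻¹ • (b n + b (n + 1))) = b n + b (n + 1) := by
    have : (qq n : ℤ) • (((qq n : ℚ))⁻¹ • (b n + b (n + 1)))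
        = ((qq n : ℤ) : ℚ) • (((qq n : ℚ))⁻¹ • (b n + b (n + 1))) :=
      (Int.cast_smul_eq_zsmul ℚ _ _).symm
    rw [this, smul_smul]
    push_cast
    rw [mul_inv_cancel₀ hq0, one_smul]
  have hrinv : (rr n : ℤ) • (((rr n : ℚ))⁻¹ • (c n + c (n + 1))) = c n + c (n + 1) := by
    have : (rr n : ℤ) • (((rr n : ℚ))⁻¹ • (c n + c (n + 1)))
        = ((rr n : ℤ) : ℚ) • (((rr n : ℚ))⁻¹ • (c n + c (n + 1))) :=
      (Int.cast_smul_eq_zsmul ℚ _ _).symm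
    rw [this, smul_smul]
    push_cast
    rw [mul_inv_cancel₀ hr0, one_smul]
  have hT : t n + t (n + 1) =
      ((1 + α n) • b n - (α n) • c n) + ((1 + α (n + 1)) • b (n + 1) - (α (n + 1)) • c (n + 1)) := by
    rw [ht n, ht (n + 1)]
  have hqu : (qq n : ℤ) • u = t n + t (n + 1) := by
    rw [hu_def, smul_add, smul_add, hqinv, smul_smul, smul_smul, ← ha1, ← ha2, hT,
      smul_sub, smul_sub, add_smul, add_smul, one_smul, one_smul]
    module
  have hrw : (rr n : ℤ) • w = t n + t (n + 1) := by
    rw [hw_def, smul_add, smul_add, hrinv, smul_smul, smul_smul, ← hd1, ← hd2,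
      add_comm (α n) 1, add_comm (α (n + 1)) 1, hT,
      smul_sub, smul_sub, add_smul, add_smul, one_smul, one_smul]
    module
  -- Bezout
  have hne : qq n ≠ rr n := by
    intro h
    have := hdist (a₁ := Sum.inr (Sum.inl n)) (a₂ := Sum.inr (Sum.inr n)) (by simpa using h)
    simp at this
  have hcop : IsCoprime (qq n : ℤ) (rr n : ℤ) := by
    rw [Int.isCoprime_iff_gcd_eq_one]
    exact_mod_cast (Nat.coprime_primes (hqq n) (hrr n)).mpr hne
  obtain ⟨s, s', hss⟩ := hcop
  refine ⟨s • w + s' • u, add_mem (zsmul_mem hwG s) (zsmul_mem huG s'), ?_⟩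
  have : ((qq n : ℤ) * (rr n : ℤ)) • (s • w + s' • u)
      = (s * (qq n : ℤ)) • ((rr n : ℤ) • w) + (s' * (rr n : ℤ)) • ((qq n : ℤ) • u) := by
    rw [smul_add, smul_smul, smul_smul, smul_smul, smul_smul]
    ring_nf
  rw [this, hqu, hrw, ← add_smul, hss, one_smul]


end Paper
end

section
/- If a torsion-free abelian group G has an endomorphism ring of finite rank, then G has a Main Decomposition G = A ⊕ H with A completely decomposable of finite rank and H clipped. -/
universe u

section Rank

variable {R : Type*} {M N : Type u} [AddCommGroup M] [AddCommGroup N]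

theorem rank_prod_eq_add [Ring R] [HasRankNullity.{u} R] [Module R M] [Module R N] :
    Module.rank R (M × N) = Module.rank R M + Module.rank R N := by
  have h := LinearMap.rank_range_add_rank_ker (LinearMap.fst R M N)
  rw [LinearMap.range_eq_top.mpr LinearMap.fst_surjective, rank_top, LinearMap.ker_fst,
    rank_range_of_injective _ LinearMap.inr_injective] at h
  exact h.symm

theorem LinearMap.prodMapLinear_injective [CommRing R] [Module R M] [Module R N] :
    Function.Injective (LinearMap.prodMapLinear R M N M N R) := by
  rintro ⟨f, g⟩ ⟨f', g'⟩ h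
  simp only [LinearMap.prodMapLinear_apply] at h
  refine Prod.ext (LinearMap.ext fun x => ?_) (LinearMap.ext fun y => ?_)
  · exact congrArg Prod.fst (LinearMap.congr_fun h (x, 0))
  · exact congrArg Prod.snd (LinearMap.congr_fun h (0, y))

theorem rank_end_add_rank_end_le_rank_end_prod [CommRing R] [Nontrivial R] [Module R M]
    [Module R N] :
    Module.rank R (Module.End R M) + Module.rank R (Module.End R N) ≤
      Module.rank R (Module.End R (M × N)) :=
  (rank_add_rank_le_rank_prod R _).trans
    (LinearMap.rank_le_of_injective _ LinearMap.prodMapLinear_injective)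

theorem one_le_rank_end [CommRing R] [IsDomain R] [Module R M] [Module.IsTorsionFree R M]
    [Nontrivial M] : 1 ≤ Module.rank R (Module.End R M) :=
  Cardinal.one_le_iff_pos.mpr (rank_pos_iff_exists_ne_zero.mpr ⟨1, one_ne_zero⟩)

end Rank

theorem AddSubgroup.isCompl_prod {G G' : Type*} [AddCommGroup G] [AddCommGroup G']
    {A H : AddSubgroup G} {A' H' : AddSubgroup G'}
    (h : IsCompl A H) (h' : IsCompl A' H') : IsCompl (A.prod A') (H.prod H') := by
  constructor
  · rw [AddSubgroup.disjoint_def]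
    rintro ⟨x, x'⟩ ⟨hxA, hxA'⟩ ⟨hxH, hxH'⟩
    exact Prod.ext (AddSubgroup.disjoint_def.mp h.disjoint hxA hxH)
      (AddSubgroup.disjoint_def.mp h'.disjoint hxA' hxH')
  · rw [codisjoint_iff, eq_top_iff]
    rintro ⟨x, x'⟩ -
    obtain ⟨a, ha, b, hb, rfl⟩ := AddSubgroup.mem_sup.mp (h.sup_eq_top ▸ AddSubgroup.mem_top x)
    obtain ⟨a', ha', b', hb', rfl⟩ :=
      AddSubgroup.mem_sup.mp (h'.sup_eq_top ▸ AddSubgroup.mem_top x')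
    exact AddSubgroup.mem_sup.mpr ⟨(a, a'), ⟨ha, ha'⟩, (b, b'), ⟨hb, hb'⟩, rfl⟩

namespace Paper

open DirectSum

section Groups

variable {G G' : Type u} [AddCommGroup G] [AddCommGroup G']

theorem rank_addMonoidHom_self_congr (e : G ≃+ G') :
    Module.rank ℤ (G →+ G) = Module.rank ℤ (G' →+ G') :=
  (addMonoidHomLequivInt ℤ).rank_eq.trans <|
    e.toIntLinearEquiv.conj.rank_eq.trans (addMonoidHomLequivInt ℤ).rank_eq.symm

theorem IsRankOne.congr (e : G ≃+ G') (h : IsRankOne G) : IsRankOne G' := by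
  obtain ⟨⟨x, hx⟩, f, hf⟩ := h
  exact ⟨⟨e x, e.map_ne_zero_iff.mpr hx⟩, f.comp e.symm.toAddMonoidHom, hf.comp e.symm.injective⟩

theorem IsRankOne.nontrivial (h : IsRankOne G) : Nontrivial G :=
  let ⟨⟨x, hx⟩, _⟩ := h
  ⟨⟨x, 0, hx⟩⟩

theorem IsRankOne.isTorsionFree (h : IsRankOne G) : Module.IsTorsionFree ℤ G :=
  let ⟨_, f, hf⟩ := h
  hf.moduleIsTorsionFree f (map_zsmul f)

theorem IsRankOne.rank_le_one (h : IsRankOne G) : Module.rank ℤ G ≤ 1 := by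
  obtain ⟨_, f, hf⟩ := h
  have hℚ : Module.rank ℤ ℚ = 1 := by
    rw [← IsFractionRing.rank_right_eq ℤ ℚ ℚ, Module.rank_self]
  simpa [hℚ] using LinearMap.lift_rank_le_of_injective f.toIntLinearMap hf

theorem rank_addMonoidHom_self_add_one_le_of_isRankOne {T B : Type u} [AddCommGroup T]
    [AddCommGroup B] (hT : IsRankOne T) :
    Module.rank ℤ (B →+ B) + 1 ≤ Module.rank ℤ (T × B →+ T × B) := by
  have := hT.nontrivial
  have := hT.isTorsionFree
  simp only [(addMonoidHomLequivInt ℤ).rank_eq]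
  calc Module.rank ℤ (Module.End ℤ B) + 1
      ≤ Module.rank ℤ (Module.End ℤ B) + Module.rank ℤ (Module.End ℤ T) := by
        gcongr; exact one_le_rank_end
    _ ≤ Module.rank ℤ (Module.End ℤ (T × B)) := by
        rw [add_comm]; exact rank_end_add_rank_end_le_rank_end_prod

theorem IsClipped.congr (e : G ≃+ G') (h : IsClipped G) : IsClipped G' := by
  rintro ⟨A, ⟨B, hAB⟩, hA⟩
  exact h ⟨e.symm.mapAddSubgroup A, ⟨e.symm.mapAddSubgroup B, e.symm.mapAddSubgroup.isCompl hAB⟩,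
    hA.congr (e.symm.addSubgroupMap A)⟩

theorem IsCompletelyDecomposable.congr (e : G ≃+ G') (h : IsCompletelyDecomposable G) :
    IsCompletelyDecomposable G' :=
  let ⟨ι, τ, hτ, ⟨f⟩⟩ := h
  ⟨ι, τ, hτ, ⟨e.symm.trans f⟩⟩

theorem isCompletelyDecomposable_of_unique [Unique G] : IsCompletelyDecomposable G :=
  have : Unique (⨁ i : Empty, (Empty.elim i : AddSubgroup ℚ)) := DFinsupp.uniqueOfIsEmpty
  ⟨Empty, Empty.elim, fun i => i.elim, ⟨AddEquiv.ofUnique⟩⟩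

theorem IsCompletelyDecomposable.rankOne_prod {T : Type*} [AddCommGroup T] (hT : IsRankOne T)
    (hG : IsCompletelyDecomposable G) : IsCompletelyDecomposable (T × G) := by
  obtain ⟨⟨x, hx⟩, f, hf⟩ := hT
  obtain ⟨ι, τ, hτ, ⟨e⟩⟩ := hG
  refine ⟨Option ι, fun i => i.elim f.range τ, ?_,
    ⟨((AddMonoidHom.ofInjective hf).prodCongr e).trans
      (DirectSum.addEquivProdDirectSum (α := fun i => ↥(i.elim f.range τ))).symm⟩⟩
  rintro (_ | i)
  · exact (AddSubgroup.ne_bot_iff_exists_ne_zero).mpr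
      ⟨⟨f x, x, rfl⟩, fun h => hx (hf (by simpa using congrArg Subtype.val h))⟩
  · exact hτ i

def HasMainDecomposition (G : Type*) [AddCommGroup G] : Prop :=
  ∃ A H : AddSubgroup G, IsCompl A H ∧ IsCompletelyDecomposable A ∧
    Module.rank ℤ A < Cardinal.aleph0 ∧ IsClipped H

theorem IsClipped.hasMainDecomposition (h : IsClipped G) : HasMainDecomposition G :=
  ⟨⊥, ⊤, isCompl_bot_top, isCompletelyDecomposable_of_unique, by simp [Cardinal.aleph0_pos],
    h.congr AddSubgroup.topEquiv.symm⟩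

theorem HasMainDecomposition.congr (e : G ≃+ G') (h : HasMainDecomposition G) :
    HasMainDecomposition G' := by
  obtain ⟨A, H, hAH, hA, hrk, hH⟩ := h
  refine ⟨e.mapAddSubgroup A, e.mapAddSubgroup H, e.mapAddSubgroup.isCompl hAH,
    hA.congr (e.addSubgroupMap A), ?_, hH.congr (e.addSubgroupMap H)⟩
  exact (e.addSubgroupMap A).toIntLinearEquiv.rank_eq.symm.trans_lt hrk

theorem HasMainDecomposition.rankOne_prod {T : Type u} [AddCommGroup T] (hT : IsRankOne T)
    (h : HasMainDecomposition G) : HasMainDecomposition (T × G) := by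
  obtain ⟨A, H, hAH, hA, hrk, hH⟩ := h
  let eA : ↥((⊤ : AddSubgroup T).prod A) ≃+ T × A :=
    (AddSubgroup.prodEquiv ⊤ A).trans (AddSubgroup.topEquiv.prodCongr (AddEquiv.refl A))
  let eH : ↥((⊥ : AddSubgroup T).prod H) ≃+ H :=
    (AddSubgroup.prodEquiv ⊥ H).trans AddEquiv.uniqueProd
  refine ⟨(⊤ : AddSubgroup T).prod A, (⊥ : AddSubgroup T).prod H,
    AddSubgroup.isCompl_prod isCompl_top_bot hAH, (hA.rankOne_prod hT).congr eA.symm, ?_,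
    hH.congr eH.symm⟩
  rw [eA.toIntLinearEquiv.rank_eq, rank_prod_eq_add]
  exact Cardinal.add_lt_aleph0 (hT.rank_le_one.trans_lt Cardinal.one_lt_aleph0) hrk

theorem exists_isRankOne_prod_addEquiv_of_not_isClipped (h : ¬ IsClipped G) :
    ∃ T B : AddSubgroup G, IsRankOne T ∧ Nonempty (T × B ≃+ G) := by
  obtain ⟨T, ⟨B, hTB⟩, hT⟩ := not_not.mp h
  exact ⟨T, B, hT, ⟨(Submodule.prodEquivOfIsCompl _ _
    (AddSubgroup.toIntSubmodule.isCompl hTB)).toAddEquiv⟩⟩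

theorem exists_rank_addMonoidHom_add_one_le_of_not_isClipped (h : ¬ IsClipped G) :
    ∃ B : AddSubgroup G, Module.rank ℤ (B →+ B) + 1 ≤ Module.rank ℤ (G →+ G) ∧
      (HasMainDecomposition B → HasMainDecomposition G) := by
  obtain ⟨T, B, hT, ⟨e⟩⟩ := exists_isRankOne_prod_addEquiv_of_not_isClipped h
  exact ⟨B, (rank_addMonoidHom_self_add_one_le_of_isRankOne hT).trans_eq
    (rank_addMonoidHom_self_congr e), fun hB => (hB.rankOne_prod hT).congr e⟩

end Groups

theorem hasMainDecomposition_of_rank_addMonoidHom_le (n : ℕ) :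
    ∀ (G : Type u) [AddCommGroup G], Module.rank ℤ (G →+ G) ≤ n → HasMainDecomposition G := by
  induction n with
  | zero =>
    intro G _ hG
    by_contra hD
    obtain ⟨B, hB, -⟩ :=
      exists_rank_addMonoidHom_add_one_le_of_not_isClipped (mt IsClipped.hasMainDecomposition hD)
    simpa using hB.trans hG
  | succ n ih =>
    intro G _ hG
    by_cases hcl : IsClipped G
    · exact hcl.hasMainDecomposition
    obtain ⟨B, hB, hBG⟩ := exists_rank_addMonoidHom_add_one_le_of_not_isClipped hcl
    exact hBG (ih B (Cardinal.add_one_le_add_one_iff.mp (by exact_mod_cast hB.trans hG)))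

theorem statement19_general (G : Type*) [AddCommGroup G]
    (hEnd : Module.rank ℤ (G →+ G) < Cardinal.aleph0) :
    ∃ A H : AddSubgroup G, IsCompl A H ∧ IsCompletelyDecomposable A ∧
      Module.rank ℤ A < Cardinal.aleph0 ∧ IsClipped H := by
  obtain ⟨n, hn⟩ := Cardinal.lt_aleph0.mp hEnd
  exact hasMainDecomposition_of_rank_addMonoidHom_le n G hn.le

/-- if the endomorphism ring of a torsion-free abelian group has
finite rank, then the group has a Main Decomposition with finite-rank
completely decomposable part. -/
theorem statement19 (G : Type*) [AddCommGroup G] [NoZeroSMulDivisors ℤ G]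
    (hEnd : Module.rank ℤ (G →+ G) < Cardinal.aleph0) :
    ∃ A H : AddSubgroup G, IsCompl A H ∧ IsCompletelyDecomposable A ∧
      Module.rank ℤ A < Cardinal.aleph0 ∧ IsClipped H :=
  statement19_general G hEnd

end Paper
end
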